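/- For any r > 0 and any complex numbers α, β, γ with |α| + |β| r < (|γ| − r) r and |γ| > r, the open ball B(0, r) is invariant for the recursion z_{n+1} = (α + β z_{n−k})/(γ − z_n): if |z_j| < r for all −k ≤ j ≤ 0 then |z_n| < r for all n ≥ 1. -/

import Mathlib

/-- If |α| + |β|r < (|γ| − r)r and |γ| > r, the ball B(0,r) is invariant for
z_{n+1} = (α + β z_{n−k})/(γ − z_n). Here `z j` denotes `z_{j−k}`. -/
theorem stmt_19 (α β γ : ℂ) (r : ℝ) (hr : 0 < r)
    (hbound : ‖α‖ + ‖β‖ * r < (‖γ‖ - r) * r)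
    (hγ : r < ‖γ‖) (k : ℕ) (z : ℕ → ℂ)
    (hrec : ∀ n : ℕ, z (n + k + 1) = (α + β * z n) / (γ - z (n + k)))
    (hinit : ∀ j : ℕ, j ≤ k → ‖z j‖ < r) :
    ∀ n : ℕ, k < n → ‖z n‖ < r := by
  have key : ∀ n : ℕ, ‖z n‖ < r := by
    intro n
    induction n using Nat.strong_induction_on with
    | _ n ih =>
      rcases le_or_gt n k with h | h
      · exact hinit n h
      · obtain ⟨m, rfl⟩ : ∃ m, n = m + k + 1 := ⟨n - k - 1, by omega⟩
        rw [hrec m]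
        have h1 : ‖z m‖ < r := ih m (by omega)
        have h2 : ‖z (m + k)‖ < r := ih (m + k) (by omega)
        have hden : ‖γ‖ - r ≤ ‖γ - z (m + k)‖ := by
          have := norm_sub_norm_le γ (z (m + k))
          linarith
        have hdenpos : (0:ℝ) < ‖γ - z (m + k)‖ := by linarith
        rw [norm_div]
        rw [div_lt_iff₀ hdenpos]
        have hnum : ‖α + β * z m‖ ≤ ‖α‖ + ‖β‖ * r := by
          calc ‖α + β * z m‖ ≤ ‖α‖ + ‖β * z m‖ :=
            norm_add_le _ _
          _ ≤ ‖α‖ + ‖β‖ * r := by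
            rw [norm_mul]
            nlinarith [norm_nonneg β]
        calc ‖α + β * z m‖ ≤ ‖α‖ + ‖β‖ * r := hnum
        _ < (‖γ‖ - r) * r := hbound
        _ ≤ r * ‖γ - z (m + k)‖ := by nlinarith
  intro n _
  exact key n
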